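/- arXiv:2105.04312 — 3 statements merged into one kernel-verified Lean document; each statement's English description precedes it below -/
import Mathlib

section
/- Let X ⊂ ℝⁿ be an open, bounded convex set, α ≥ 0, and a : X → ℝ a function with 0 < inf_X a ≤ sup_X a < ∞. Then the measure f with density a·d_{∂X}^α with respect to Lebesgue measure satisfies: there is a constant C ≥ 1, depending only on n, α, inf_X a, and sup_X a, such that ∫_𝔈 f ≤ C ∫_{½𝔈} f for every ellipsoid 𝔈 whose center lies in the closure of X. -/
open MeasureTheory Metric Set Filter Topology
open scoped RealInnerProductSpace ENNReal NNReal

noncomputable section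
open scoped Classical

abbrev E (n : ℕ) := EuclideanSpace ℝ (Fin n)

/-- Center of mass of a set. -/
def centerOfMass {n : ℕ} (S : Set (E n)) : E n :=
  (volume S).toReal⁻¹ • ∫ x in S, x

/-- Dilation of `S` by factor `t` about the point `z`. -/
def dilate {n : ℕ} (z : E n) (t : ℝ) (S : Set (E n)) : Set (E n) :=
  (fun x => z + t • (x - z)) '' S

/-- Support of a measure. -/
def msupport {n : ℕ} (f : Measure (E n)) : Set (E n) :=
  {x | ∀ r > 0, 0 < f (Metric.ball x r)}

/-- `f` is doubling on bounded convex domains with constant `C`. -/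
def DoublingOnConvex {n : ℕ} (f : Measure (E n)) (C : ℝ) : Prop :=
  1 ≤ C ∧ ∀ S : Set (E n), IsOpen S → Bornology.IsBounded S → Convex ℝ S → S.Nonempty →
    centerOfMass S ∈ msupport f →
    f S ≤ ENNReal.ofReal C * f (dilate (centerOfMass S) (1 / 2) S)

/-- `T` pushes the measure `f` forward to `g`. -/
def Pushforward {n : ℕ} (T : E n → E n) (f g : Measure (E n)) : Prop :=
  ∀ φ : E n → ℝ, Measurable φ → (∃ M, ∀ y, |φ y| ≤ M) →
    ∫ x, φ (T x) ∂f = ∫ y, φ y ∂g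

/-- Subdifferential of `u` at `x`. -/
def subgrad {n : ℕ} (u : E n → ℝ) (x : E n) : Set (E n) :=
  {p | ∀ z, u x + ⟪p, z - x⟫ ≤ u z}

/-- Image of a set under the subdifferential. -/
def subgradImage {n : ℕ} (u : E n → ℝ) (B : Set (E n)) : Set (E n) :=
  ⋃ x ∈ B, subgrad u x

/-- `S` is a centered section of `u` at `z` with height `h`, with defining affine
function `x ↦ ⟪p, x⟫ + c`. -/
def IsCenteredSectionWith {n : ℕ} (u : E n → ℝ) (z : E n) (h : ℝ) (S : Set (E n))
    (p : E n) (c : ℝ) : Prop :=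
  ⟪p, z⟫ + c = u z + h ∧ S = {x | u x < ⟪p, x⟫ + c} ∧
    Bornology.IsBounded S ∧ centerOfMass S = z

/-- `S` is a centered section of `u` at `z` with height `h`. -/
def IsCenteredSection {n : ℕ} (u : E n → ℝ) (z : E n) (h : ℝ) (S : Set (E n)) : Prop :=
  ∃ p c, IsCenteredSectionWith u z h S p c

/-- An ellipsoid centered at `z`. -/
def IsEllipsoid {n : ℕ} (z : E n) (S : Set (E n)) : Prop :=
  ∃ M : Matrix (Fin n) (Fin n) ℝ, M.PosDef ∧
    S = (fun v => z + Matrix.toEuclideanLin M v) '' Metric.ball (0 : E n) 1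

/-- Distance to the boundary, positive inside `X` and zero outside. -/
def bdist {n : ℕ} (X : Set (E n)) (x : E n) : ℝ :=
  if x ∈ X then Metric.infDist x (frontier X) else 0

/-- The measure with density `a · d_{∂X}^α` with respect to Lebesgue measure. -/
def powerDensityMeasure {n : ℕ} (X : Set (E n)) (a : E n → ℝ) (α : ℝ) : Measure (E n) :=
  volume.withDensity fun x => if x ∈ X then ENNReal.ofReal (a x * bdist X x ^ α) else 0

/-! The halving `x ↦ x' = z + (x - z) / 2` about a point `z ∈ closure X` maps the convex set `X`
into itself and a ball `B(x, r) ⊆ X` onto a ball `B(x', r / 2) ⊆ X`; hence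
`d_{∂X}(x) ≤ 2 d_{∂X}(x')`, and the density `a d_{∂X}^α` at `x` is at most `(sup a / inf a) 2^α`
times its value at `x'`. Integrating over `𝔈` and changing variables `x ↦ x'`, whose Jacobian is
`2^{-n}`, gives the constant `(sup a / inf a) 2^{α+n}`. -/

section Homothety

variable {F : Type*} [NormedAddCommGroup F] [NormedSpace ℝ F]

theorem measurableEmbedding_homothety [MeasurableSpace F] [BorelSpace F] (z : F) {r : ℝ}
    (hr : r ≠ 0) : MeasurableEmbedding (AffineMap.homothety z r) :=
  (Topology.IsOpenEmbedding.of_continuous_injective_isOpenMap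
    (AffineMap.homothety_continuous z r)
    (AffineEquiv.homothetyUnitsMulHom z (Units.mk0 r hr)).injective
    (AffineMap.homothety_isOpenMap z r hr)).measurableEmbedding

variable [MeasurableSpace F] [BorelSpace F] [FiniteDimensional ℝ F]
  (μ : Measure F) [μ.IsAddHaarMeasure]

theorem map_homothety_addHaar (z : F) {r : ℝ} (hr : r ≠ 0) :
    μ.map (AffineMap.homothety z r) = ENNReal.ofReal |(r ^ Module.finrank ℝ F)⁻¹| • μ := by
  ext s hs
  rw [Measure.map_apply (AffineMap.homothety_continuous z r).measurable hs, Measure.smul_apply,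
    smul_eq_mul]
  change μ (AffineEquiv.homothetyUnitsMulHom z (Units.mk0 r hr) ⁻¹' s) = _
  rw [← AffineEquiv.image_symm, AffineEquiv.coe_homothetyUnitsMulHom_apply_symm]
  simp

theorem setLIntegral_comp_homothety (z : F) {r : ℝ} (hr : r ≠ 0) (g : F → ℝ≥0∞) (s : Set F) :
    ∫⁻ x in s, g (AffineMap.homothety z r x) ∂μ =
      ENNReal.ofReal |(r ^ Module.finrank ℝ F)⁻¹| *
        ∫⁻ y in AffineMap.homothety z r '' s, g y ∂μ := by
  have hT := measurableEmbedding_homothety z hr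
  rw [(MeasurePreserving.mk hT.measurable (map_homothety_addHaar μ z hr)).setLIntegral_comp_emb
    hT, Measure.restrict_smul, lintegral_smul_measure, smul_eq_mul]

theorem withDensity_le_mul_withDensity_image_homothety {d : F → ℝ≥0∞} {c : ℝ≥0∞} (hc : c ≠ ∞)
    (z : F) {r : ℝ} (hr : r ≠ 0) (hd : ∀ x, d x ≤ c * d (AffineMap.homothety z r x))
    (s : Set F) :
    μ.withDensity d s ≤ c * ENNReal.ofReal |(r ^ Module.finrank ℝ F)⁻¹| *
      μ.withDensity d (AffineMap.homothety z r '' s) := by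
  rw [withDensity_apply' _ s, withDensity_apply', mul_assoc,
    ← setLIntegral_comp_homothety μ z hr, ← lintegral_const_mul' _ _ hc]
  exact lintegral_mono hd

end Homothety

section DistanceToBoundary

variable {F : Type*} [NormedAddCommGroup F] [NormedSpace ℝ F] {X : Set F} {x z : F} {t : ℝ}

theorem infDist_frontier_eq_infDist_compl [FiniteDimensional ℝ F] (hx : x ∈ X) :
    infDist x (frontier X) = infDist x Xᶜ := by
  rcases eq_or_ne X univ with rfl | hX
  · simp
  obtain ⟨y, hy, hxy⟩ := exists_mem_frontier_infDist_compl_eq_dist hx hX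
  refine le_antisymm (hxy ▸ infDist_le_dist_of_mem hy) ?_
  rw [← infDist_closure (s := Xᶜ)]
  exact infDist_le_infDist_of_subset ((frontier_compl X).symm.subset.trans frontier_subset_closure)
    ⟨y, hy⟩

theorem Convex.homothety_mem_interior (hX : Convex ℝ X) (hz : z ∈ closure X)
    (hx : x ∈ interior X) (ht₀ : 0 < t) (ht₁ : t ≤ 1) :
    AffineMap.homothety z t x ∈ interior X := by
  have := hX.combo_interior_closure_mem_interior hx hz ht₀ (sub_nonneg.2 ht₁)
    (add_sub_cancel t 1)
  convert this using 1
  rw [AffineMap.homothety_apply, vsub_eq_sub, vadd_eq_add]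
  module

theorem Convex.homothety_mem (hXo : IsOpen X) (hX : Convex ℝ X) (hz : z ∈ closure X)
    (hx : x ∈ X) (ht₀ : 0 < t) (ht₁ : t ≤ 1) : AffineMap.homothety z t x ∈ X := by
  rw [← hXo.interior_eq] at hx ⊢
  exact hX.homothety_mem_interior hz hx ht₀ ht₁

theorem Convex.mul_infDist_compl_le_infDist_compl_homothety (hXo : IsOpen X)
    (hX : Convex ℝ X) (hz : z ∈ closure X) (ht₀ : 0 < t) (ht₁ : t ≤ 1) :
    t * infDist x Xᶜ ≤ infDist (AffineMap.homothety z t x) Xᶜ := by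
  rcases Xᶜ.eq_empty_or_nonempty with hc | hc
  · simp [hc]
  rw [le_infDist hc]
  intro y hy
  by_contra! hlt
  set w := AffineMap.homothety z t⁻¹ y
  have hyw : AffineMap.homothety z t w = y := by
    simp [w, ← AffineMap.homothety_mul_apply, mul_inv_cancel₀ ht₀.ne']
  have hdist : dist (AffineMap.homothety z t x) y = t * dist x w := by
    simp [← hyw, AffineMap.homothety_apply, dist_eq_norm, ← smul_sub, norm_smul, abs_of_pos ht₀]
  have hw : w ∈ X :=
    ball_infDist_compl_subset (mem_ball'.2 (lt_of_mul_lt_mul_left (hdist ▸ hlt) ht₀.le))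
  exact hy (hyw ▸ hX.homothety_mem hXo hz hw ht₀ ht₁)

end DistanceToBoundary

section PowerDensity

variable {n : ℕ} {X : Set (E n)} {a : E n → ℝ} {α ia sa t : ℝ} {x z : E n}

def powerDensity (X : Set (E n)) (a : E n → ℝ) (α : ℝ) (x : E n) : ℝ≥0∞ :=
  if x ∈ X then ENNReal.ofReal (a x * bdist X x ^ α) else 0

theorem powerDensityMeasure_eq_withDensity :
    powerDensityMeasure X a α = volume.withDensity (powerDensity X a α) :=
  rfl

theorem dilate_eq_image_homothety (S : Set (E n)) :
    dilate z t S = AffineMap.homothety z t '' S := by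
  ext y
  simp [dilate, AffineMap.homothety_apply, add_comm z]

theorem bdist_nonneg : 0 ≤ bdist X x := by
  unfold bdist
  split_ifs
  exacts [infDist_nonneg, le_rfl]

theorem bdist_of_mem (hx : x ∈ X) : bdist X x = infDist x Xᶜ := by
  rw [bdist, if_pos hx, infDist_frontier_eq_infDist_compl hx]

theorem Convex.bdist_le_inv_mul_bdist_homothety (hXo : IsOpen X) (hX : Convex ℝ X)
    (hz : z ∈ closure X) (hx : x ∈ X) (ht₀ : 0 < t) (ht₁ : t ≤ 1) :
    bdist X x ≤ t⁻¹ * bdist X (AffineMap.homothety z t x) := by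
  have hTx := hX.homothety_mem hXo hz hx ht₀ ht₁
  rw [bdist_of_mem hx, bdist_of_mem hTx, le_inv_mul_iff₀ ht₀]
  exact hX.mul_infDist_compl_le_infDist_compl_homothety hXo hz ht₀ ht₁

theorem Convex.powerDensity_le_mul_powerDensity_homothety (hXo : IsOpen X) (hX : Convex ℝ X)
    (hz : z ∈ closure X) (hα : 0 ≤ α) (hia : 0 < ia) (ha : ∀ x ∈ X, ia ≤ a x ∧ a x ≤ sa)
    (ht₀ : 0 < t) (ht₁ : t ≤ 1) (x : E n) :
    powerDensity X a α x ≤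
      ENNReal.ofReal (sa / ia * t⁻¹ ^ α) * powerDensity X a α (AffineMap.homothety z t x) := by
  by_cases hx : x ∈ X
  swap
  · simp [powerDensity, hx]
  have hTx := hX.homothety_mem hXo hz hx ht₀ ht₁
  have hsa : 0 < sa := hia.trans_le ((ha x hx).1.trans (ha x hx).2)
  rw [powerDensity, powerDensity, if_pos hx, if_pos hTx, ← ENNReal.ofReal_mul (by positivity)]
  refine ENNReal.ofReal_le_ofReal ?_
  set d := bdist X (AffineMap.homothety z t x)
  have hd : bdist X x ^ α ≤ t⁻¹ ^ α * d ^ α := by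
    rw [← Real.mul_rpow (by positivity) bdist_nonneg]
    exact Real.rpow_le_rpow bdist_nonneg
      (hX.bdist_le_inv_mul_bdist_homothety hXo hz hx ht₀ ht₁) hα
  calc a x * bdist X x ^ α ≤ sa * (t⁻¹ ^ α * d ^ α) :=
        mul_le_mul (ha x hx).2 hd (Real.rpow_nonneg bdist_nonneg α) hsa.le
    _ = sa / ia * t⁻¹ ^ α * (ia * d ^ α) := by field_simp
    _ ≤ sa / ia * t⁻¹ ^ α * (a (AffineMap.homothety z t x) * d ^ α) :=
        mul_le_mul_of_nonneg_left
          (mul_le_mul_of_nonneg_right (ha _ hTx).1 (Real.rpow_nonneg bdist_nonneg α))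
          (by positivity)

end PowerDensity

/-- **Powers of the distance function are doubling on ellipsoids.** (Lemma 2.6.)
If `X` is open, bounded and convex, `α ≥ 0` and `0 < ia ≤ a ≤ sa < ∞` on `X`,
then the measure `f = a·d_{∂X}^α` satisfies `f(𝔈) ≤ C f(½𝔈)` for every ellipsoid `𝔈`
centered in `closure X`, with `C` depending only on `n`, `α`, `ia`, `sa`. -/
theorem power_density_doubling_on_ellipsoids (n : ℕ) (α ia sa : ℝ)
    (hα : 0 ≤ α) (hia : 0 < ia) (hsa : ia ≤ sa) :
    ∃ C : ℝ, 1 ≤ C ∧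
      ∀ (X : Set (E n)) (a : E n → ℝ),
        IsOpen X → Bornology.IsBounded X → Convex ℝ X → X.Nonempty →
        (∀ x ∈ X, ia ≤ a x ∧ a x ≤ sa) →
        ∀ (z : E n) (𝔈 : Set (E n)), IsEllipsoid z 𝔈 → z ∈ closure X →
          powerDensityMeasure X a α 𝔈 ≤
            ENNReal.ofReal C * powerDensityMeasure X a α (dilate z (1 / 2) 𝔈) := by
  refine ⟨sa / ia * 2 ^ α * 2 ^ n, ?_, ?_⟩
  · exact one_le_mul_of_one_le_of_one_le
      (one_le_mul_of_one_le_of_one_le ((one_le_div hia).2 hsa) (Real.one_le_rpow one_le_two hα))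
      (one_le_pow₀ one_le_two)
  intro X a hXo _ hX _ ha z 𝔈 _ hz
  have key := withDensity_le_mul_withDensity_image_homothety volume ENNReal.ofReal_ne_top z
    (by norm_num) (hX.powerDensity_le_mul_powerDensity_homothety hXo hz hα hia ha
      (by norm_num : (0 : ℝ) < 1 / 2) (by norm_num)) 𝔈
  rw [finrank_euclideanSpace_fin, ← ENNReal.ofReal_mul' (abs_nonneg _)] at key
  rw [powerDensityMeasure_eq_withDensity, dilate_eq_image_homothety]
  convert key using 3
  simp [one_div, inv_pow]
end
end

section
/- Let u : ℝⁿ → ℝ be convex, z ∈ ℝⁿ, h > 0, and let S_h^c(z) be a centered section of u at z with height h. If z₁ and z₂ are two opposite points on ∂S_h^c(z), i.e., z₂ = z + l(z − z₁) for some l > 0, then n^{−3/2} ≤ l ≤ n^{3/2}. -/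
open MeasureTheory Metric Set Filter Topology
open scoped RealInnerProductSpace ENNReal NNReal

noncomputable section
open scoped Classical

/-!
Let `K` be an open bounded convex set with centroid `z` in a space of dimension `d`, and `f` a
linear functional with minimum `m` at `q ∈ closure K` and `f - m ≤ w` on `K`. The homothety of
ratio `t / w` about `q` maps `K` into itself and misses `{f - m > t}`, so this superlevel set
has volume at most `(1 - (t / w) ^ d) |K|`; the layer-cake formula then gives
`f z - m ≤ d / (d + 1) * w` (Minkowski). Through Hahn–Banach this says that
`z + (z - p) / d ∈ closure K` for every `p ∈ closure K`, so a boundary point `z + l (z - z₁)`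
with `l < 1 / d` would be interior. Applied to `z₁` and to `z₂`, this gives `1 / n ≤ l ≤ n`.
-/

open Module

lemma Convex.homothety_image_subset {V : Type*} [AddCommGroup V] [Module ℝ V] [TopologicalSpace V]
    [IsTopologicalAddGroup V] [ContinuousConstSMul ℝ V] {K : Set V} (hKc : Convex ℝ K)
    (hKo : IsOpen K) {q : V} (hq : q ∈ closure K) {s : ℝ} (hs₀ : 0 < s) (hs₁ : s ≤ 1) :
    AffineMap.homothety q s '' K ⊆ K := by
  rintro _ ⟨x, hx, rfl⟩
  have hcombo : AffineMap.homothety q s x = (1 - s) • q + s • x := by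
    rw [AffineMap.homothety_apply, vsub_eq_sub, vadd_eq_add]
    module
  rw [hcombo, ← hKo.interior_eq]
  exact hKc.combo_closure_interior_mem_interior hq (hKo.interior_eq.symm ▸ hx)
    (sub_nonneg.2 hs₁) hs₀ (by ring)

lemma integral_Ioc_one_sub_div_pow {w : ℝ} (hw : 0 ≤ w) (d : ℕ) :
    ∫ t in Ioc 0 w, (1 - (t / w) ^ d) = d / (d + 1) * w := by
  rcases hw.eq_or_lt with rfl | hw
  · simp
  rw [← intervalIntegral.integral_of_le hw.le]
  simp_rw [div_pow]
  rw [intervalIntegral.integral_sub intervalIntegrable_const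
      ((intervalIntegral.intervalIntegrable_pow d).div_const _),
    intervalIntegral.integral_const, intervalIntegral.integral_div, integral_pow]
  field_simp
  ring

lemma add_one_mul_integral_le_of_measureReal_lt_le {α : Type*} [MeasurableSpace α]
    {ν : Measure α} {g : α → ℝ} {w : ℝ} (d : ℕ) (hg : Integrable g ν) (hg₀ : 0 ≤ᵐ[ν] g)
    (hgw : g ≤ᵐ[ν] fun _ => w) (hw : 0 ≤ w)
    (hdist : ∀ t ∈ Ioc 0 w, ν.real {a | t < g a} ≤ (1 - (t / w) ^ d) * ν.real univ) :
    ((d : ℝ) + 1) * ∫ a, g a ∂ν ≤ d * w * ν.real univ := by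
  have htail : ∫ t in Ioi 0, ν.real {a | t < g a} = ∫ t in Ioc 0 w, ν.real {a | t < g a} := by
    refine setIntegral_eq_of_subset_of_ae_sdiff_eq_zero nullMeasurableSet_Ioi
      Ioc_subset_Ioi_self (Eventually.of_forall fun t ht => ?_)
    have hwt : w < t := not_le.1 fun h => ht.2 ⟨ht.1, h⟩
    rw [measureReal_def, ENNReal.toReal_eq_zero_iff]
    left
    refine measure_mono_null (fun a ha => hwt.trans ha) (measure_eq_zero_iff_ae_notMem.2 ?_)
    filter_upwards [hgw] with a ha using not_lt.2 ha
  have hbound : ∫ t in Ioc 0 w, ν.real {a | t < g a} ≤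
      ∫ t in Ioc 0 w, (1 - (t / w) ^ d) * ν.real univ :=
    integral_mono_of_nonneg (ae_of_all _ fun _ => measureReal_nonneg)
      (Continuous.integrableOn_Ioc (by fun_prop)) (ae_restrict_of_forall_mem measurableSet_Ioc hdist)
  rw [hg.integral_eq_integral_meas_lt hg₀, htail]
  calc ((d : ℝ) + 1) * ∫ t in Ioc 0 w, ν.real {a | t < g a}
      ≤ (d + 1) * ∫ t in Ioc 0 w, (1 - (t / w) ^ d) * ν.real univ := by gcongr
    _ = d * w * ν.real univ := by
      rw [integral_mul_const, integral_Ioc_one_sub_div_pow hw]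
      field_simp

section HaarMeasure

variable {F : Type*} [NormedAddCommGroup F] [NormedSpace ℝ F] [FiniteDimensional ℝ F]
  [MeasurableSpace F] [BorelSpace F] {μ : Measure F} [μ.IsAddHaarMeasure] {K : Set F}

lemma measureReal_restrict_lt_sub_le (hKo : IsOpen K) (hKc : Convex ℝ K) (hKμ : μ K ≠ ∞)
    (f : F →L[ℝ] ℝ) {q : F} (hq : q ∈ closure K) {w t : ℝ} (ht : 0 < t) (htw : t ≤ w)
    (hw : ∀ x ∈ K, f x - f q ≤ w) :
    (μ.restrict K).real {x | t < f x - f q} ≤ (1 - (t / w) ^ finrank ℝ F) * μ.real K := by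
  set s := t / w
  have hs₀ : 0 < s := div_pos ht (ht.trans_le htw)
  set T := AffineMap.homothety q s
  have hTK : T '' K ⊆ K :=
    hKc.homothety_image_subset hKo hq hs₀ (div_le_one_of_le₀ htw (ht.trans_le htw).le)
  have hdisj : Disjoint (T '' K) ({x | t < f x - f q} ∩ K) := by
    refine Set.disjoint_left.2 ?_
    rintro _ ⟨y, hy, rfl⟩ ⟨hlt, -⟩
    have hTy : f (T y) - f q = s * (f y - f q) := by
      simp only [T, AffineMap.homothety_apply, vsub_eq_sub, vadd_eq_add, map_add, map_smul,
        map_sub, smul_eq_mul]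
      ring
    have hsw : s * w = t := div_mul_cancel₀ t (ht.trans_le htw).ne'
    have hlt' : t < s * (f y - f q) := hTy ▸ hlt
    linarith [mul_le_mul_of_nonneg_left (hw y hy) hs₀.le]
  have hTμ : μ.real (T '' K) = s ^ finrank ℝ F * μ.real K := by
    rw [measureReal_def, Measure.addHaar_image_homothety, ENNReal.toReal_mul,
      ENNReal.toReal_ofReal (abs_nonneg _), abs_of_pos (pow_pos hs₀ _), measureReal_def]
  have hTμ_ne : μ (T '' K) ≠ ∞ := ((measure_mono hTK).trans_lt hKμ.lt_top).ne
  have hunion := measureReal_mono (μ := μ)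
    (union_subset hTK (inter_subset_right (s := {x | t < f x - f q}))) hKμ
  rw [measureReal_union' hdisj ((AffineMap.homothety_isOpenMap q s hs₀.ne') K hKo).measurableSet
    hTμ_ne ((measure_mono inter_subset_right).trans_lt hKμ.lt_top).ne, hTμ] at hunion
  rw [measureReal_restrict_apply' hKo.measurableSet]
  linarith

/-- Minkowski's centroid inequality, in integrated form. -/
lemma add_one_mul_setIntegral_le (hKo : IsOpen K) (hKb : Bornology.IsBounded K) (hKc : Convex ℝ K)
    (f : F →L[ℝ] ℝ) {q : F} (hq : q ∈ closure K) (hqmin : ∀ x ∈ K, f q ≤ f x) {H : ℝ}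
    (hH : ∀ x ∈ K, f x ≤ H) :
    ((finrank ℝ F : ℝ) + 1) * ∫ x in K, f x ∂μ ≤ (finrank ℝ F * H + f q) * μ.real K := by
  have hKμ : μ K ≠ ∞ := hKb.measure_lt_top.ne
  have hf : IntegrableOn f K μ :=
    (f.continuous.continuousOn.integrableOn_compact hKb.isCompact_closure).mono_set subset_closure
  have hqH : f q ≤ H := closure_minimal hH (isClosed_le f.continuous continuous_const) hq
  have hbound : ∀ x ∈ K, f x - f q ≤ H - f q := fun x hx => sub_le_sub_right (hH x hx) _
  have key := add_one_mul_integral_le_of_measureReal_lt_le (ν := μ.restrict K)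
    (g := fun x => f x - f q) (finrank ℝ F) (hf.sub (integrableOn_const hKμ))
    (ae_restrict_of_forall_mem hKo.measurableSet fun x hx => sub_nonneg.2 (hqmin x hx))
    (ae_restrict_of_forall_mem hKo.measurableSet hbound) (sub_nonneg.2 hqH)
    fun t ht => by
      rw [measureReal_restrict_apply_univ]
      exact measureReal_restrict_lt_sub_le hKo hKc hKμ f hq ht.1 ht.2 hbound
  rw [integral_sub hf (integrableOn_const hKμ), setIntegral_const, smul_eq_mul,
    measureReal_restrict_apply_univ] at key
  linarith

end HaarMeasure

variable {n : ℕ}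

lemma pos_of_mem_frontier {S : Set (E n)} {x : E n} (hx : x ∈ frontier S) : 0 < n := by
  refine Nat.pos_of_ne_zero fun hn => ?_
  subst hn
  simp at hx

lemma setIntegral_eq_measureReal_mul_centerOfMass {K : Set (E n)} (hKb : Bornology.IsBounded K)
    (hK : volume K ≠ 0) (f : E n →L[ℝ] ℝ) :
    ∫ x in K, f x = volume.real K * f (centerOfMass K) := by
  have hid : IntegrableOn (fun x => x) K :=
    (continuous_id.continuousOn.integrableOn_compact hKb.isCompact_closure).mono_set subset_closure
  rw [centerOfMass, map_smul, ← f.integral_comp_comm hid, smul_eq_mul, ← measureReal_def,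
    mul_inv_cancel_left₀ (measureReal_ne_zero_iff hKb.measure_lt_top.ne |>.2 hK)]

lemma centerOfMass_add_inv_smul_sub_mem_closure {K : Set (E n)} (hKo : IsOpen K)
    (hKb : Bornology.IsBounded K) (hKc : Convex ℝ K) {p : E n} (hp : p ∈ closure K) :
    centerOfMass K + (n : ℝ)⁻¹ • (centerOfMass K - p) ∈ closure K := by
  rcases n.eq_zero_or_pos with rfl | hn
  · convert hp using 1
    exact Subsingleton.elim _ _
  set z := centerOfMass K
  by_contra hy
  obtain ⟨f, r, hfr, hry⟩ := geometric_hahn_banach_closed_point hKc.closure isClosed_closure hy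
  obtain ⟨q, hq, hqmin⟩ :=
    hKb.isCompact_closure.exists_isMinOn ⟨p, hp⟩ f.continuous.continuousOn
  have hK : volume K ≠ 0 := (hKo.measure_pos volume (closure_nonempty_iff.1 ⟨p, hp⟩)).ne'
  have hV : 0 < volume.real K := ENNReal.toReal_pos hK hKb.measure_lt_top.ne
  have hcentroid := add_one_mul_setIntegral_le (μ := volume) hKo hKb hKc f hq
    (fun x hx => hqmin (subset_closure hx)) fun x hx => (hfr x (subset_closure hx)).le
  rw [finrank_euclideanSpace_fin, setIntegral_eq_measureReal_mul_centerOfMass hKb hK] at hcentroid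
  have hfz : ((n : ℝ) + 1) * f z ≤ n * r + f q := le_of_mul_le_mul_right (by linarith) hV
  have hry' : n * r < (n + 1) * f z - f p := by
    have hn' : (0 : ℝ) < n := by exact_mod_cast hn
    rw [map_add, map_smul, map_sub, smul_eq_mul] at hry
    have := mul_lt_mul_of_pos_left hry hn'
    rw [mul_add, ← mul_assoc, mul_inv_cancel₀ hn'.ne', one_mul] at this
    linarith
  linarith [isMinOn_iff.1 hqmin p hp]

lemma inv_le_of_add_smul_sub_mem_frontier {K : Set (E n)} (hKo : IsOpen K)
    (hKb : Bornology.IsBounded K) (hKc : Convex ℝ K) (hz : centerOfMass K ∈ K) {z₁ : E n}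
    (hz₁ : z₁ ∈ closure K) {l : ℝ} (hl : 0 ≤ l)
    (hz₂ : centerOfMass K + l • (centerOfMass K - z₁) ∈ frontier K) :
    (n : ℝ)⁻¹ ≤ l := by
  set z := centerOfMass K
  by_contra! hlt
  have hn : (0 : ℝ) < n := inv_pos.1 (hl.trans_lt hlt)
  have hln : l * n < 1 := by simpa [hn.ne'] using mul_lt_mul_of_pos_right hlt hn
  have hcombo : z + l • (z - z₁) = (1 - l * n) • z + (l * n) • (z + (n : ℝ)⁻¹ • (z - z₁)) := by
    rw [smul_add, smul_smul, mul_inv_cancel_right₀ hn.ne']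
    module
  have hint : z + l • (z - z₁) ∈ interior K := by
    rw [hcombo]
    exact hKc.combo_interior_closure_mem_interior (hKo.interior_eq.symm ▸ hz)
      (centerOfMass_add_inv_smul_sub_mem_closure hKo hKb hKc hz₁) (sub_pos.2 hln)
      (by positivity) (by ring)
  rw [hKo.frontier_eq] at hz₂
  exact hz₂.2 (hKo.interior_eq ▸ hint)

lemma inv_le_and_le_of_mem_frontier {K : Set (E n)} (hKo : IsOpen K)
    (hKb : Bornology.IsBounded K) (hKc : Convex ℝ K) (hz : centerOfMass K ∈ K) {z₁ z₂ : E n}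
    (hz₁ : z₁ ∈ frontier K) (hz₂ : z₂ ∈ frontier K) {l : ℝ} (hl : 0 < l)
    (hopp : z₂ = centerOfMass K + l • (centerOfMass K - z₁)) :
    (n : ℝ)⁻¹ ≤ l ∧ l ≤ n := by
  have hopp' : z₁ = centerOfMass K + l⁻¹ • (centerOfMass K - z₂) := by
    rw [hopp, sub_add_cancel_left, smul_neg, smul_smul, inv_mul_cancel₀ hl.ne', one_smul]
    abel
  have hn : (0 : ℝ) < n := by exact_mod_cast pos_of_mem_frontier hz₁
  refine ⟨inv_le_of_add_smul_sub_mem_frontier hKo hKb hKc hz (frontier_subset_closure hz₁) hl.le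
    (hopp ▸ hz₂), ?_⟩
  have := inv_le_of_add_smul_sub_mem_frontier hKo hKb hKc hz (frontier_subset_closure hz₂)
    (inv_nonneg.2 hl.le) (hopp' ▸ hz₁)
  exact (inv_le_inv₀ hn hl).1 this

lemma IsCenteredSection.isOpen {u : E n → ℝ} {z : E n} {h : ℝ} {S : Set (E n)}
    (hu : Continuous u) (hS : IsCenteredSection u z h S) : IsOpen S := by
  obtain ⟨p, c, -, rfl, -⟩ := hS
  exact isOpen_lt hu (by fun_prop)

lemma IsCenteredSection.convex {u : E n → ℝ} {z : E n} {h : ℝ} {S : Set (E n)}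
    (hu : ConvexOn ℝ univ u) (hS : IsCenteredSection u z h S) : Convex ℝ S := by
  obtain ⟨p, c, -, rfl, -⟩ := hS
  have hconcave : ConcaveOn ℝ univ fun x => ⟪p, x⟫ + c :=
    ((innerₗ (E n) p).concaveOn convex_univ).add_const c
  simpa [sub_neg] using (hu.sub hconcave).convex_lt 0

lemma IsCenteredSection.center_mem {u : E n → ℝ} {z : E n} {h : ℝ} {S : Set (E n)}
    (hh : 0 < h) (hS : IsCenteredSection u z h S) : z ∈ S := by
  obtain ⟨p, c, hz, rfl, -⟩ := hS
  show u z < ⟪p, z⟫ + c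
  linarith

/-- **Centered sections are balanced.** (Lemma 2.8.)  If `S` is a centered section of a
convex function `u` at `z` with height `h`, and `z₁`, `z₂` are opposite points of `∂S`,
i.e. `z₂ = z + l(z − z₁)` with `l > 0`, then `n^{-3/2} ≤ l ≤ n^{3/2}`. -/
theorem centered_sections_balanced (n : ℕ) (u : E n → ℝ) (z : E n) (h : ℝ)
    (S : Set (E n)) (hu : ConvexOn ℝ Set.univ u) (hh : 0 < h)
    (hS : IsCenteredSection u z h S)
    (z₁ z₂ : E n) (hz₁ : z₁ ∈ frontier S) (hz₂ : z₂ ∈ frontier S)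
    (l : ℝ) (hl : 0 < l) (hopp : z₂ = z + l • (z - z₁)) :
    (n : ℝ) ^ (-(3 : ℝ) / 2) ≤ l ∧ l ≤ (n : ℝ) ^ ((3 : ℝ) / 2) := by
  have hSo := hS.isOpen (continuousOn_univ.1 (hu.continuousOn isOpen_univ))
  have hSc := hS.convex hu
  have hzS := hS.center_mem hh
  obtain ⟨p, c, -, -, hSb, rfl⟩ := hS
  obtain ⟨hlow, hup⟩ := inv_le_and_le_of_mem_frontier hSo hSb hSc hzS hz₁ hz₂ hl hopp
  have hn : (1 : ℝ) ≤ n := by exact_mod_cast pos_of_mem_frontier hz₁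
  constructor
  · calc (n : ℝ) ^ (-(3 : ℝ) / 2) ≤ (n : ℝ) ^ (-1 : ℝ) :=
          Real.rpow_le_rpow_of_exponent_le hn (by norm_num)
      _ = (n : ℝ)⁻¹ := Real.rpow_neg_one _
      _ ≤ l := hlow
  · calc l ≤ n := hup
      _ = (n : ℝ) ^ (1 : ℝ) := (Real.rpow_one _).symm
      _ ≤ (n : ℝ) ^ ((3 : ℝ) / 2) := Real.rpow_le_rpow_of_exponent_le hn (by norm_num)
end
end

section
/- Let u : ℝⁿ → ℝ be convex, z ∈ ℝⁿ, h > 0, and let S_h^c(z) = {u < ℓ} be a centered section of u at z with height h, where ℓ is the defining affine function. Then h ≤ sup_{S_h^c(z)} (ℓ − u) ≤ (1 + n^{3/2}) h. -/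
open MeasureTheory Metric Set Filter Topology
open scoped RealInnerProductSpace ENNReal NNReal

noncomputable section
open scoped Classical

/-!
Put `v = ℓ - u`: it is concave, `S = {0 < v}` and `v z = h`, which gives the lower bound.
Jensen's inequality at the center of mass `z` gives `∫_S v ≤ h |S|`. For the upper bound fix
`x₀ ∈ S` and `t ∈ (0, 1)`. The homothety `ψ` of ratio `t` centred at `x₀` maps `S` into `S`, and
by concavity `v ∘ ψ ≥ (1 - t) v x₀ + t v` on `S`; integrating over `S` and using
`∫ (1_S v) ∘ ψ = t⁻ⁿ ∫_S v` gives `(1 - t) v x₀ ≤ (t⁻ⁿ - t) h`. Multiplying by `tⁿ`, dividing by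
`1 - t` and letting `t → 1` yields `v x₀ ≤ (n + 1) h ≤ (1 + n^{3/2}) h`.
-/

open Finset in
theorem le_succ_mul_of_forall_one_sub_mul_le {a b : ℝ} (d : ℕ)
    (h : ∀ t ∈ Ioo (0 : ℝ) 1, (1 - t) * a ≤ ((t ^ d)⁻¹ - t) * b) :
    a ≤ (d + 1) * b := by
  have hgeom : ∀ t ∈ Ioo (0 : ℝ) 1, t ^ d * a ≤ (∑ k ∈ range (d + 1), t ^ k) * b := by
    rintro t ⟨ht0, ht1⟩
    have htd : 0 < t ^ d := pow_pos ht0 d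
    have hsum : (1 - t) * ∑ k ∈ range (d + 1), t ^ k = 1 - t ^ (d + 1) := by
      rw [mul_comm, geom_sum_mul_neg]
    have key : (1 - t) * (t ^ d * a) ≤ (1 - t) * ((∑ k ∈ range (d + 1), t ^ k) * b) := by
      calc (1 - t) * (t ^ d * a) = t ^ d * ((1 - t) * a) := by ring
        _ ≤ t ^ d * (((t ^ d)⁻¹ - t) * b) := mul_le_mul_of_nonneg_left (h t ⟨ht0, ht1⟩) htd.le
        _ = (1 - t ^ (d + 1)) * b := by field_simp; ring
        _ = _ := by rw [← hsum, mul_assoc]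
    exact le_of_mul_le_mul_left key (by linarith)
  have hlim : ∀ f : ℝ → ℝ, Continuous f → Tendsto f (𝓝[<] 1) (𝓝 (f 1)) :=
    fun f hf => (hf.tendsto 1).mono_left nhdsWithin_le_nhds
  have := le_of_tendsto_of_tendsto (hlim (fun t => t ^ d * a) (by fun_prop))
    (hlim (fun t => (∑ k ∈ range (d + 1), t ^ k) * b) (by fun_prop))
    (eventually_of_mem (Ioo_mem_nhdsLT zero_lt_one) hgeom)
  simpa using this

theorem natCast_le_rpow (n : ℕ) {x : ℝ} (hx : 1 ≤ x) : (n : ℝ) ≤ (n : ℝ) ^ x := by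
  rcases n.eq_zero_or_pos with rfl | hn
  · simp [Real.zero_rpow (by linarith : x ≠ 0)]
  · exact Real.self_le_rpow_of_one_le (Nat.one_le_cast.mpr hn) hx

section ConcaveOnFiniteDimensional

open Module

variable {F : Type*} [NormedAddCommGroup F] [NormedSpace ℝ F] [FiniteDimensional ℝ F]
  [MeasurableSpace F] [BorelSpace F] {μ : Measure F} [μ.IsAddHaarMeasure] {v : F → ℝ}

theorem Continuous.integrableOn_of_isBounded {G : Type*} [NormedAddCommGroup G] {f : F → G}
    (hf : Continuous f) {S : Set F} (hS : Bornology.IsBounded S) : IntegrableOn f S μ :=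
  (hf.continuousOn.integrableOn_compact hS.isCompact_closure).mono_set subset_closure

theorem ConcaveOn.setIntegral_le_measureReal_mul_setAverage (hv : ConcaveOn ℝ univ v)
    {S : Set F} (hSo : IsOpen S) (hbd : Bornology.IsBounded S) (hne : S.Nonempty) :
    ∫ x in S, v x ∂μ ≤ μ.real S * v (⨍ x in S, x ∂μ) := by
  have hcont : Continuous v := hv.locallyLipschitz.continuous
  have h0 : μ S ≠ 0 := (hSo.measure_pos μ hne).ne'
  have hfin : μ S ≠ ⊤ := hbd.measure_lt_top.ne
  have jensen := hv.le_map_set_average hcont.continuousOn isClosed_univ h0 hfin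
    (Eventually.of_forall fun _ => mem_univ _) (continuous_id.integrableOn_of_isBounded hbd)
    (hcont.integrableOn_of_isBounded hbd)
  have hV : 0 < μ.real S := ENNReal.toReal_pos h0 hfin
  rwa [setAverage_eq, smul_eq_mul, inv_mul_le_iff₀ hV] at jensen

theorem integral_comp_homothety {G : Type*} [NormedAddCommGroup G] [NormedSpace ℝ G]
    (f : F → G) (x₀ : F) (t : ℝ) :
    ∫ x, f ((1 - t) • x₀ + t • x) ∂μ = |(t ^ finrank ℝ F)⁻¹| • ∫ x, f x ∂μ := by
  rw [Measure.integral_comp_smul μ (fun y => f ((1 - t) • x₀ + y)) t,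
    integral_add_left_eq_self]

theorem integrable_comp_homothety {G : Type*} [NormedAddCommGroup G] {f : F → G}
    (hf : Integrable f μ) (x₀ : F) {t : ℝ} (ht : t ≠ 0) :
    Integrable (fun x => f ((1 - t) • x₀ + t • x)) μ :=
  (hf.comp_add_left ((1 - t) • x₀)).comp_smul ht

theorem ConcaveOn.mul_measureReal_le_setIntegral (hv : ConcaveOn ℝ univ v)
    (hfin : μ {x | 0 < v x} ≠ ⊤) (hint : IntegrableOn v {x | 0 < v x} μ)
    {x₀ : F} (hx₀ : 0 < v x₀) {t : ℝ} (ht₀ : 0 < t) (ht₁ : t ≤ 1) :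
    (1 - t) * v x₀ * μ.real {x | 0 < v x} ≤
      ((t ^ finrank ℝ F)⁻¹ - t) * ∫ x in {x | 0 < v x}, v x ∂μ := by
  set S := {x | 0 < v x}
  set ψ : F → F := fun x => (1 - t) • x₀ + t • x
  have hcont : Continuous v := hv.locallyLipschitz.continuous
  have hSm : MeasurableSet S := (isOpen_lt continuous_const hcont).measurableSet
  have hvψ : ∀ x ∈ S, (1 - t) * v x₀ + t * v x ≤ v (ψ x) := fun x _ =>
    hv.2 (mem_univ x₀) (mem_univ x) (by linarith) ht₀.le (by ring)
  have hψS : ∀ x ∈ S, ψ x ∈ S := fun x (hx : 0 < v x) =>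
    lt_of_lt_of_le (by nlinarith) (hvψ x hx)
  have hind : Integrable (fun x => S.indicator v (ψ x)) μ :=
    integrable_comp_homothety (hint.integrable_indicator hSm) x₀ ht₀.ne'
  have hconst : IntegrableOn (fun _ => (1 - t) * v x₀) S μ := integrableOn_const hfin
  have hlower : ∫ x in S, ((1 - t) * v x₀ + t * v x) ∂μ ≤ ∫ x in S, S.indicator v (ψ x) ∂μ :=
    setIntegral_mono_on (hconst.add (hint.const_mul t)) hind.integrableOn hSm
      fun x hx => by rw [indicator_of_mem (hψS x hx)]; exact hvψ x hx
  have hupper : ∫ x in S, S.indicator v (ψ x) ∂μ ≤ (t ^ finrank ℝ F)⁻¹ * ∫ x in S, v x ∂μ := by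
    calc ∫ x in S, S.indicator v (ψ x) ∂μ ≤ ∫ x, S.indicator v (ψ x) ∂μ :=
          setIntegral_le_integral hind (Eventually.of_forall fun x =>
            indicator_nonneg (fun y (hy : 0 < v y) => hy.le) _)
      _ = (t ^ finrank ℝ F)⁻¹ * ∫ x in S, v x ∂μ := by
          rw [integral_comp_homothety, integral_indicator hSm, smul_eq_mul,
            abs_of_pos (by positivity)]
  rw [integral_add hconst (hint.const_mul t), setIntegral_const, integral_const_mul,
    smul_eq_mul] at hlower
  linarith

theorem ConcaveOn.le_succ_finrank_mul (hv : ConcaveOn ℝ univ v)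
    (hbd : Bornology.IsBounded {x | 0 < v x}) {h : ℝ}
    (hmean : ∫ x in {x | 0 < v x}, v x ∂μ ≤ h * μ.real {x | 0 < v x})
    {x₀ : F} (hx₀ : 0 < v x₀) :
    v x₀ ≤ (finrank ℝ F + 1) * h := by
  have hcont : Continuous v := hv.locallyLipschitz.continuous
  have hfin : μ {x | 0 < v x} ≠ ⊤ := hbd.measure_lt_top.ne
  have hV : 0 < μ.real {x | 0 < v x} :=
    ENNReal.toReal_pos ((isOpen_lt continuous_const hcont).measure_pos μ ⟨x₀, hx₀⟩).ne' hfin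
  refine le_succ_mul_of_forall_one_sub_mul_le _ fun t ⟨ht₀, ht₁⟩ => ?_
  have hcoef : 0 ≤ (t ^ finrank ℝ F)⁻¹ - t := by
    have : 1 ≤ (t ^ finrank ℝ F)⁻¹ :=
      one_le_inv₀ (pow_pos ht₀ _) |>.mpr (pow_le_one₀ ht₀.le ht₁.le)
    linarith
  refine le_of_mul_le_mul_right ?_ hV
  calc (1 - t) * v x₀ * μ.real {x | 0 < v x}
      ≤ ((t ^ finrank ℝ F)⁻¹ - t) * ∫ x in {x | 0 < v x}, v x ∂μ :=
        hv.mul_measureReal_le_setIntegral hfin (hcont.integrableOn_of_isBounded hbd) hx₀ ht₀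
          ht₁.le
    _ ≤ ((t ^ finrank ℝ F)⁻¹ - t) * (h * μ.real {x | 0 < v x}) :=
        mul_le_mul_of_nonneg_left hmean hcoef
    _ = _ := by ring

end ConcaveOnFiniteDimensional

theorem setAverage_eq_centerOfMass {n : ℕ} (S : Set (E n)) : ⨍ x in S, x = centerOfMass S := by
  rw [setAverage_eq]; rfl

/-- **Height of a centered section.** (Lemma 2.9.)  If `S = {u < ℓ}` is a centered
section of a convex function `u` at `z` with height `h`, with defining affine function
`ℓ`, then `h ≤ sup_S (ℓ − u) ≤ (1 + n^{3/2}) h`. -/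
theorem centered_section_sup_bound (n : ℕ) (u : E n → ℝ) (z : E n) (h : ℝ)
    (S : Set (E n)) (p : E n) (c : ℝ)
    (hu : ConvexOn ℝ Set.univ u) (hh : 0 < h)
    (hS : IsCenteredSectionWith u z h S p c) :
    h ≤ sSup ((fun x => (⟪p, x⟫ + c) - u x) '' S) ∧
      sSup ((fun x => (⟪p, x⟫ + c) - u x) '' S) ≤ (1 + (n : ℝ) ^ ((3 : ℝ) / 2)) * h := by
  obtain ⟨hℓz, rfl, hbd, hcm⟩ := hS
  set v : E n → ℝ := fun x => (⟪p, x⟫ + c) - u x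
  have hv : ConcaveOn ℝ univ v := (((innerₛₗ ℝ p).concaveOn convex_univ).add_const c).sub hu
  have hSv : {x | u x < ⟪p, x⟫ + c} = {x | 0 < v x} := by simp only [v, sub_pos]
  rw [hSv] at hbd hcm ⊢
  have hvz : v z = h := by simp only [v, hℓz]; ring
  have hzS : z ∈ {x | 0 < v x} := show 0 < v z from hvz ▸ hh
  have hmean : ∫ x in {x | 0 < v x}, v x ≤ h * volume.real {x | 0 < v x} := by
    have hSo : IsOpen {x | 0 < v x} := isOpen_lt continuous_const hv.locallyLipschitz.continuous
    have := hv.setIntegral_le_measureReal_mul_setAverage (μ := volume) hSo hbd ⟨z, hzS⟩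
    rwa [setAverage_eq_centerOfMass, hcm, hvz, mul_comm] at this
  have hbound : ∀ y ∈ v '' {x | 0 < v x}, y ≤ (n + 1) * h := by
    rintro _ ⟨x, hx, rfl⟩
    simpa using hv.le_succ_finrank_mul hbd hmean hx
  refine ⟨le_csSup ⟨_, hbound⟩ ⟨z, hzS, hvz⟩, ?_⟩
  calc sSup (v '' {x | 0 < v x}) ≤ (n + 1) * h := csSup_le ⟨h, z, hzS, hvz⟩ hbound
    _ ≤ (1 + (n : ℝ) ^ ((3 : ℝ) / 2)) * h := by
      nlinarith [natCast_le_rpow n (show (1 : ℝ) ≤ 3 / 2 by norm_num)]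
end
end
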